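/- arXiv:1408.2120 — 9 statements merged into one kernel-verified Lean document; each statement's English description precedes it below -/
import Mathlib

section
/- For θ ∈ (0, π) with θ ≠ 0 mod π, the Grushin geodesic satisfies x(θ, π/sin θ) = x(π−θ, π/sin θ) = 1 and y(θ, π/sin θ) = y(π−θ, π/sin θ) = π/(2 sin²θ), i.e., the two geodesics with parameters θ and π−θ meet at time π/sin θ at the point (1, π/(2 sin θ |sin θ|)). -/
/-!
Once `t * sin θ = π`, the phase `θ - t sin θ` of the geodesic has moved by exactly `π`,
which flips the sign in `x` and leaves the `sin (2θ - 2t sin θ)` term of `y` unchanged, so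
the endpoint depends on `θ` only through `sin θ`. Since `sin (π - θ) = sin θ`, the parameters
`θ` and `π - θ` reach that time together, at the same point.
-/

open Real

/-- First coordinate of the Grushin geodesic from (-1,0). -/
noncomputable def grushinX (θ t : ℝ) : ℝ := -Real.sin (θ - t * Real.sin θ) / Real.sin θ

/-- Second coordinate of the Grushin geodesic from (-1,0). -/
noncomputable def grushinY (θ t : ℝ) : ℝ :=
  (2 * t * Real.sin θ - 2 * Real.cos θ * Real.sin θ +
    Real.sin (2 * θ - 2 * t * Real.sin θ)) / (4 * (Real.sin θ) ^ 2)

lemma sin_ne_zero_of_mul_sin_eq_pi {θ t : ℝ} (ht : t * sin θ = π) : sin θ ≠ 0 := by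
  rintro hs
  rw [hs, mul_zero] at ht
  exact pi_ne_zero ht.symm

lemma grushinX_eq_one_of_mul_sin_eq_pi {θ t : ℝ} (ht : t * sin θ = π) : grushinX θ t = 1 := by
  rw [grushinX, ht, sin_sub_pi, neg_neg, div_self (sin_ne_zero_of_mul_sin_eq_pi ht)]

lemma grushinY_eq_of_mul_sin_eq_pi {θ t : ℝ} (ht : t * sin θ = π) :
    grushinY θ t = π / (2 * sin θ ^ 2) := by
  have hs := sin_ne_zero_of_mul_sin_eq_pi ht
  have h2t : 2 * t * sin θ = 2 * π := by rw [mul_assoc, ht]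
  rw [grushinY, h2t, sin_sub_two_pi, sin_two_mul]
  field_simp
  ring

/-- The geodesics with parameters θ and π-θ meet at time π/sin θ at the point
    (1, π/(2 sin²θ)). -/
theorem grushin_geodesics_meet (θ : ℝ) (hθ : θ ∈ Set.Ioo 0 Real.pi) :
    grushinX θ (Real.pi / Real.sin θ) = 1 ∧
    grushinX (Real.pi - θ) (Real.pi / Real.sin θ) = 1 ∧
    grushinY θ (Real.pi / Real.sin θ) = Real.pi / (2 * (Real.sin θ) ^ 2) ∧
    grushinY (Real.pi - θ) (Real.pi / Real.sin θ) = Real.pi / (2 * (Real.sin θ) ^ 2) := by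
  have hs : sin θ ≠ 0 := (sin_pos_of_pos_of_lt_pi hθ.1 hθ.2).ne'
  have ht : π / sin θ * sin θ = π := div_mul_cancel₀ _ hs
  have ht' : π / sin θ * sin (π - θ) = π := by rwa [sin_pi_sub]
  refine ⟨grushinX_eq_one_of_mul_sin_eq_pi ht, grushinX_eq_one_of_mul_sin_eq_pi ht',
    grushinY_eq_of_mul_sin_eq_pi ht,
    (grushinY_eq_of_mul_sin_eq_pi ht').trans (by rw [sin_pi_sub])⟩
end

section
/- For all θ ∈ (0, π/2) and u ∈ (0, π), the vectors (cos u, sin u) and (1 − u cos θ sin θ, u cos²θ) are not parallel; equivalently, cos(u) · u cos²θ − sin(u) · (1 − u cos θ sin θ) ≠ 0. -/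
/-!
The determinant equals `u cos θ cos (u - θ) - sin u`. A product of cosines of two angles with
sum `u` is at most `cos² (u/2)`, and `u cos² (u/2) < sin u = 2 sin (u/2) cos (u/2)` is
`u/2 < tan (u/2)`. Hence the determinant is negative.
-/

open Real

theorem Real.mul_cos_lt_sin {x : ℝ} (h0 : 0 < x) (h1 : x < π / 2) : x * cos x < sin x := by
  have hcos : 0 < cos x := cos_pos_of_mem_Ioo ⟨by linarith, h1⟩
  have htan : x < sin x / cos x := tan_eq_sin_div_cos x ▸ lt_tan h0 h1
  rwa [lt_div_iff₀ hcos] at htan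

theorem Real.mul_cos_sq_half_lt_sin {u : ℝ} (h0 : 0 < u) (h1 : u < π) :
    u * cos (u / 2) ^ 2 < sin u := by
  have hcos : 0 < cos (u / 2) := cos_pos_of_mem_Ioo ⟨by linarith, by linarith⟩
  have hhalf : u / 2 * cos (u / 2) < sin (u / 2) := mul_cos_lt_sin (by linarith) (by linarith)
  calc u * cos (u / 2) ^ 2 = 2 * (u / 2 * cos (u / 2)) * cos (u / 2) := by ring
    _ < 2 * sin (u / 2) * cos (u / 2) := by gcongr
    _ = sin u := by rw [← sin_two_mul, mul_div_cancel₀ u two_ne_zero]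

theorem Real.cos_mul_cos_sub_le_cos_sq_half (θ u : ℝ) :
    cos θ * cos (u - θ) ≤ cos (u / 2) ^ 2 := by
  have hprod : cos θ * cos (u - θ) = (cos (2 * θ - u) + cos u) / 2 := by
    have h := two_mul_cos_mul_cos θ (u - θ)
    rw [show θ - (u - θ) = 2 * θ - u by ring, add_sub_cancel] at h
    linarith
  have hhalf : cos (u / 2) ^ 2 = (1 + cos u) / 2 := by
    rw [cos_sq, mul_div_cancel₀ u two_ne_zero]
    ring
  rw [hprod, hhalf]
  linarith [cos_le_one (2 * θ - u)]

theorem grushin_vectors_not_parallel_general (θ u : ℝ)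
    (hu : u ∈ Set.Ioo 0 Real.pi) :
    Real.cos u * (u * (Real.cos θ) ^ 2) -
      Real.sin u * (1 - u * Real.cos θ * Real.sin θ) ≠ 0 := by
  obtain ⟨hu0, huπ⟩ := hu
  have hdet : cos u * (u * cos θ ^ 2) - sin u * (1 - u * cos θ * sin θ)
      = u * (cos θ * cos (u - θ)) - sin u := by
    rw [cos_sub]
    ring
  have hbound : u * (cos θ * cos (u - θ)) ≤ u * cos (u / 2) ^ 2 :=
    mul_le_mul_of_nonneg_left (cos_mul_cos_sub_le_cos_sq_half θ u) hu0.le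
  rw [hdet]
  linarith [mul_cos_sq_half_lt_sin hu0 huπ]

/-- For θ ∈ (0, π/2) and u ∈ (0, π), the vectors (cos u, sin u) and
    (1 − u cos θ sin θ, u cos²θ) are not parallel: their determinant is nonzero. -/
theorem grushin_vectors_not_parallel (θ u : ℝ)
    (hθ : θ ∈ Set.Ioo 0 (Real.pi / 2)) (hu : u ∈ Set.Ioo 0 Real.pi) :
    Real.cos u * (u * (Real.cos θ) ^ 2) -
      Real.sin u * (1 - u * Real.cos θ * Real.sin θ) ≠ 0 :=
  grushin_vectors_not_parallel_general θ u hu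
end

section
/- For all θ ∈ (0, π) and t with 0 < t sin θ < π, one has sin(t sin θ) − t cos θ sin θ · cos(θ − t sin θ) > 0. -/
/-! With `s = t sin θ ∈ (0, π)`, the subtracted term is `s cos θ cos (θ - s)`, and the product-to-sum
formula bounds `2 cos θ cos (θ - s)` by `1 + cos s`. It remains to see `s (1 + cos s) < 2 sin s`,
which after halving the angle is `x cos x < sin x`, i.e. `x < tan x` on `(0, π/2)`. -/

namespace Real

theorem mul_cos_lt_sin_s2 {x : ℝ} (h0 : 0 < x) (h : x < π / 2) : x * cos x < sin x := by
  have hcos : 0 < cos x := cos_pos_of_mem_Ioo ⟨by linarith [pi_pos], h⟩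
  have htan := lt_tan h0 h
  rwa [tan_eq_sin_div_cos, lt_div_iff₀ hcos] at htan

theorem mul_one_add_cos_lt_two_mul_sin {x : ℝ} (h0 : 0 < x) (h : x < π) :
    x * (1 + cos x) < 2 * sin x := by
  obtain ⟨u, rfl⟩ : ∃ u, x = 2 * u := ⟨x / 2, by ring⟩
  have hcos : 0 < cos u := cos_pos_of_mem_Ioo ⟨by linarith [pi_pos], by linarith⟩
  calc 2 * u * (1 + cos (2 * u)) = 4 * cos u * (u * cos u) := by rw [cos_two_mul]; ring
    _ < 4 * cos u * sin u := by gcongr; exact mul_cos_lt_sin_s2 (by linarith) (by linarith)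
    _ = 2 * sin (2 * u) := by rw [sin_two_mul]; ring

theorem two_mul_cos_mul_cos_le (x y : ℝ) : 2 * cos x * cos y ≤ 1 + cos (x - y) := by
  linarith [two_mul_cos_mul_cos x y, cos_le_one (x + y)]

end Real

theorem grushin_dx_dtheta_numerator_pos_general (θ t : ℝ)
    (h1 : 0 < t * Real.sin θ) (h2 : t * Real.sin θ < Real.pi) :
    Real.sin (t * Real.sin θ) -
      t * Real.cos θ * Real.sin θ * Real.cos (θ - t * Real.sin θ) > 0 := by
  set s := t * Real.sin θ
  have hprod : 2 * Real.cos θ * Real.cos (θ - s) ≤ 1 + Real.cos s := by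
    simpa using Real.two_mul_cos_mul_cos_le θ (θ - s)
  have hterm : t * Real.cos θ * Real.sin θ * Real.cos (θ - s) =
      s * (2 * Real.cos θ * Real.cos (θ - s)) / 2 := by ring
  rw [hterm, gt_iff_lt, sub_pos]
  linarith [mul_le_mul_of_nonneg_left hprod h1.le, Real.mul_one_add_cos_lt_two_mul_sin h1 h2]

/-- For θ ∈ (0, π) and t with 0 < t sin θ < π, one has
    sin(t sin θ) − t cos θ sin θ · cos(θ − t sin θ) > 0. -/
theorem grushin_dx_dtheta_numerator_pos (θ t : ℝ)
    (hθ : θ ∈ Set.Ioo 0 Real.pi)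
    (h1 : 0 < t * Real.sin θ) (h2 : t * Real.sin θ < Real.pi) :
    Real.sin (t * Real.sin θ) -
      t * Real.cos θ * Real.sin θ * Real.cos (θ - t * Real.sin θ) > 0 :=
  grushin_dx_dtheta_numerator_pos_general θ t h1 h2
end

section
/- For θ ∈ (0, π), the Jacobian determinant of the map γ(θ,t) = (x(θ,t), y(θ,t)), where x(θ,t) = −sin(θ − t sin θ)/sin θ and y(θ,t) = (2t sin θ − 2 cos θ sin θ + sin(2θ − 2t sin θ))/(4 sin²θ), equals (t cos θ cos(θ − t sin θ) sin θ − sin(t sin θ))/sin³θ. -/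
open Real

theorem grushinY_eq_sin_mul_cos (θ t : ℝ) :
    grushinY θ t = (t * sin θ - cos θ * sin θ + sin (θ - t * sin θ) * cos (θ - t * sin θ)) /
      (2 * sin θ ^ 2) := by
  rw [grushinY, show 2 * θ - 2 * t * sin θ = 2 * (θ - t * sin θ) by ring, sin_two_mul]
  ring

theorem hasDerivAt_const_sub_mul_sin (θ t : ℝ) :
    HasDerivAt (fun t ↦ θ - t * sin θ) (-sin θ) t := by
  simpa using ((hasDerivAt_id t).mul_const (sin θ)).const_sub θ

theorem hasDerivAt_self_sub_mul_sin (θ t : ℝ) :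
    HasDerivAt (fun θ ↦ θ - t * sin θ) (1 - t * cos θ) θ :=
  (hasDerivAt_id θ).sub ((hasDerivAt_sin θ).const_mul t)

section PartialDerivatives

variable {θ : ℝ} (t : ℝ)

theorem hasDerivAt_grushinX_t (hs : sin θ ≠ 0) :
    HasDerivAt (grushinX θ) (cos (θ - t * sin θ)) t := by
  refine (((hasDerivAt_const_sub_mul_sin θ t).sin.fun_neg).div_const (sin θ)).congr_deriv ?_
  field_simp

theorem hasDerivAt_grushinY_t (hs : sin θ ≠ 0) :
    HasDerivAt (grushinY θ) (sin (θ - t * sin θ) ^ 2 / sin θ) t := by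
  have hA := hasDerivAt_const_sub_mul_sin θ t
  rw [show grushinY θ = _ from funext (grushinY_eq_sin_mul_cos θ)]
  refine ((((hasDerivAt_id t).mul_const (sin θ)).sub_const (cos θ * sin θ)).add
    (hA.sin.mul hA.cos)).div_const (2 * sin θ ^ 2) |>.congr_deriv ?_
  generalize θ - t * sin θ = A
  field_simp
  linear_combination -sin_sq_add_cos_sq A

theorem hasDerivAt_grushinX_theta (hs : sin θ ≠ 0) :
    HasDerivAt (fun θ ↦ grushinX θ t)
      ((cos θ * sin (θ - t * sin θ) - sin θ * (1 - t * cos θ) * cos (θ - t * sin θ)) /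
        sin θ ^ 2) θ := by
  refine (((hasDerivAt_self_sub_mul_sin θ t).sin.fun_neg).div (hasDerivAt_sin θ) hs).congr_deriv ?_
  ring

theorem hasDerivAt_grushinY_theta (hs : sin θ ≠ 0) :
    HasDerivAt (fun θ ↦ grushinY θ t)
      (cos (θ - t * sin θ) *
        (sin θ * (1 - t * cos θ) * cos (θ - t * sin θ) - cos θ * sin (θ - t * sin θ)) /
        sin θ ^ 3) θ := by
  have hA := hasDerivAt_self_sub_mul_sin θ t
  have hden : HasDerivAt (fun θ ↦ 2 * sin θ ^ 2) (2 * (2 * sin θ * cos θ)) θ := by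
    simpa using ((hasDerivAt_sin θ).pow 2).const_mul 2
  simp only [grushinY_eq_sin_mul_cos]
  refine ((((hasDerivAt_sin θ).const_mul t).fun_sub
    ((hasDerivAt_cos θ).fun_mul (hasDerivAt_sin θ))).fun_add
    (hA.sin.fun_mul hA.cos)).fun_div hden (by positivity) |>.congr_deriv ?_
  field_simp
  linear_combination (sin θ * t * cos θ - sin θ) * sin_sq_add_cos_sq (θ - t * sin θ) +
    sin θ * sin_sq_add_cos_sq θ

end PartialDerivatives

/-- For θ ∈ (0,π), the Jacobian determinant of γ(θ,t) = (x(θ,t), y(θ,t)) equals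
    (t cos θ cos(θ − t sin θ) sin θ − sin(t sin θ))/sin³θ. -/
theorem grushin_jacobian (θ t : ℝ) (hθ : θ ∈ Set.Ioo 0 Real.pi) :
    deriv (fun θ' => grushinX θ' t) θ * deriv (fun t' => grushinY θ t') t -
      deriv (fun θ' => grushinY θ' t) θ * deriv (fun t' => grushinX θ t') t =
    (t * Real.cos θ * Real.cos (θ - t * Real.sin θ) * Real.sin θ -
      Real.sin (t * Real.sin θ)) / (Real.sin θ) ^ 3 := by
  have hs : sin θ ≠ 0 := (sin_pos_of_pos_of_lt_pi hθ.1 hθ.2).ne'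
  rw [(hasDerivAt_grushinX_theta t hs).deriv, (hasDerivAt_grushinY_t t hs).deriv,
    (hasDerivAt_grushinY_theta t hs).deriv, (hasDerivAt_grushinX_t t hs).deriv]
  have hsin : sin (t * sin θ) = sin θ * cos (θ - t * sin θ) - cos θ * sin (θ - t * sin θ) := by
    rw [← sin_sub, sub_sub_cancel]
  rw [hsin]
  generalize θ - t * sin θ = A
  field_simp
  linear_combination (cos θ * sin A - sin θ * (1 - t * cos θ) * cos A) * sin_sq_add_cos_sq A
end

section
/- For θ ∈ (0, π), ∂γ/∂θ(θ,t) = (1/sin³θ) · Jac(θ,t) · (sin θ, −cos(θ − t sin θ)), where Jac(θ,t) = t cos θ cos(θ − t sin θ) sin θ − sin(t sin θ). In particular, at any zero of the Jacobian, ∂γ/∂θ vanishes. -/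
/-- Numerator of the Jacobian of the Grushin exponential map. -/
noncomputable def grushinJacNum (θ t : ℝ) : ℝ :=
  t * Real.cos θ * Real.cos (θ - t * Real.sin θ) * Real.sin θ - Real.sin (t * Real.sin θ)

lemma hasDerivAt_u (θ t : ℝ) :
    HasDerivAt (fun θ' => θ' - t * Real.sin θ') (1 - t * Real.cos θ) θ := by
  exact (hasDerivAt_id' θ).sub ((Real.hasDerivAt_sin θ).const_mul t)

/-- For θ ∈ (0,π), ∂γ/∂θ(θ,t) = (1/sin³θ) · Jac(θ,t) · (sin θ, −cos(θ − t sin θ));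
    in particular ∂γ/∂θ vanishes at any zero of the Jacobian. -/
theorem grushin_dgamma_dtheta (θ t : ℝ) (hθ : θ ∈ Set.Ioo 0 Real.pi) :
    (deriv (fun θ' => grushinX θ' t) θ =
        1 / (Real.sin θ) ^ 3 * grushinJacNum θ t * Real.sin θ ∧
      deriv (fun θ' => grushinY θ' t) θ =
        1 / (Real.sin θ) ^ 3 * grushinJacNum θ t * (-Real.cos (θ - t * Real.sin θ))) ∧
    (grushinJacNum θ t = 0 →
      deriv (fun θ' => grushinX θ' t) θ = 0 ∧ deriv (fun θ' => grushinY θ' t) θ = 0) := by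
  obtain ⟨h0, h1⟩ := hθ
  have hs : Real.sin θ ≠ 0 := ne_of_gt (Real.sin_pos_of_pos_of_lt_pi h0 h1)
  set u : ℝ := θ - t * Real.sin θ with hu_def
  have hu : HasDerivAt (fun θ' => θ' - t * Real.sin θ') (1 - t * Real.cos θ) θ :=
    hasDerivAt_u θ t
  -- derivative of X
  have hXnum : HasDerivAt (fun θ' => -Real.sin (θ' - t * Real.sin θ'))
      (-(Real.cos u * (1 - t * Real.cos θ))) θ :=
    by have h := (Real.hasDerivAt_sin (θ - t * Real.sin θ)).comp θ hu; exact h.neg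
  have hX : HasDerivAt (fun θ' => grushinX θ' t)
      ((-(Real.cos u * (1 - t * Real.cos θ)) * Real.sin θ -
        (-Real.sin u) * Real.cos θ) / (Real.sin θ) ^ 2) θ := by
    exact (hXnum.div (Real.hasDerivAt_sin θ) hs).congr_deriv rfl
  -- derivative of Y
  have hN : HasDerivAt (fun θ' => 2 * t * Real.sin θ' - 2 * Real.cos θ' * Real.sin θ' +
      Real.sin (2 * θ' - 2 * t * Real.sin θ'))
      (2 * t * Real.cos θ -
        (2 * (-Real.sin θ) * Real.sin θ + 2 * Real.cos θ * Real.cos θ) +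
        Real.cos (2 * u) * (2 - 2 * t * Real.cos θ)) θ := by
    have h2u : HasDerivAt (fun θ' => 2 * θ' - 2 * t * Real.sin θ')
        (2 - 2 * t * Real.cos θ) θ := by
      have := ((hasDerivAt_id' θ).const_mul 2).sub
        ((Real.hasDerivAt_sin θ).const_mul (2 * t))
      exact this.congr_deriv (by ring)
    have hsin2u : HasDerivAt (fun θ' => Real.sin (2 * θ' - 2 * t * Real.sin θ'))
        (Real.cos (2 * u) * (2 - 2 * t * Real.cos θ)) θ := by
      have := (Real.hasDerivAt_sin (2 * θ - 2 * t * Real.sin θ)).comp θ h2u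
      exact this.congr_deriv (by rw [show (2:ℝ) * u = 2 * θ - 2 * t * Real.sin θ by rw [hu_def]; ring])
    have hcs : HasDerivAt (fun θ' => 2 * Real.cos θ' * Real.sin θ')
        (2 * (-Real.sin θ) * Real.sin θ + 2 * Real.cos θ * Real.cos θ) θ := by
      exact
        (((Real.hasDerivAt_cos θ).const_mul 2).mul (Real.hasDerivAt_sin θ))
    exact (((Real.hasDerivAt_sin θ).const_mul (2 * t)).sub hcs).add hsin2u
  have hD : HasDerivAt (fun θ' => 4 * (Real.sin θ') ^ 2)
      (4 * (2 * Real.sin θ * Real.cos θ)) θ := by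
    simpa using ((Real.hasDerivAt_sin θ).pow 2).const_mul 4
  have hD0 : 4 * (Real.sin θ) ^ 2 ≠ 0 := by positivity
  have hY : HasDerivAt (fun θ' => grushinY θ' t)
      (((2 * t * Real.cos θ -
        (2 * (-Real.sin θ) * Real.sin θ + 2 * Real.cos θ * Real.cos θ) +
        Real.cos (2 * u) * (2 - 2 * t * Real.cos θ)) * (4 * (Real.sin θ) ^ 2) -
        (2 * t * Real.sin θ - 2 * Real.cos θ * Real.sin θ +
          Real.sin (2 * θ - 2 * t * Real.sin θ)) * (4 * (2 * Real.sin θ * Real.cos θ))) /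
        (4 * (Real.sin θ) ^ 2) ^ 2) θ := by
    exact hN.div hD hD0
  -- trig rewrites
  have hts : Real.sin (t * Real.sin θ) =
      Real.sin θ * Real.cos u - Real.cos θ * Real.sin u := by
    have : t * Real.sin θ = θ - u := by rw [hu_def]; ring
    rw [this, Real.sin_sub]
  have h2u_eq : (2 : ℝ) * θ - 2 * t * Real.sin θ = 2 * u := by rw [hu_def]; ring
  have hsin2 : Real.sin (2 * u) = 2 * Real.sin u * Real.cos u := Real.sin_two_mul u
  have hcos2 : Real.cos (2 * u) = 2 * Real.cos u ^ 2 - 1 := Real.cos_two_mul u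
  have hpyth : Real.sin θ ^ 2 + Real.cos θ ^ 2 = 1 := Real.sin_sq_add_cos_sq θ
  have hpythu : Real.sin u ^ 2 + Real.cos u ^ 2 = 1 := Real.sin_sq_add_cos_sq u
  have hXeq : deriv (fun θ' => grushinX θ' t) θ =
      1 / (Real.sin θ) ^ 3 * grushinJacNum θ t * Real.sin θ := by
    rw [hX.deriv, grushinJacNum, hts]
    field_simp
    ring
  have hYeq : deriv (fun θ' => grushinY θ' t) θ =
      1 / (Real.sin θ) ^ 3 * grushinJacNum θ t * (-Real.cos (θ - t * Real.sin θ)) := by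
    rw [hY.deriv, grushinJacNum, hts, h2u_eq, hsin2, hcos2, ← hu_def]
    field_simp
    linear_combination (2 * Real.sin θ) * hpyth
  refine ⟨⟨hXeq, hYeq⟩, fun hJ => ⟨?_, ?_⟩⟩
  · rw [hXeq, hJ]; ring
  · rw [hYeq, hJ]; ring
end

section
/- For every θ ∈ (0, π) with θ ≠ π/2, if t_θ > 0 satisfies Jac(θ, t_θ) = 0 where Jac(θ,t) = (t cos θ cos(θ − t sin θ) sin θ − sin(t sin θ))/sin³θ, then ∂Jac/∂θ(θ, t_θ) ≠ 0. -/
/-- Jacobian of the Grushin exponential map from (-1,0). -/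
noncomputable def grushinJac (θ t : ℝ) : ℝ :=
  (t * Real.cos θ * Real.cos (θ - t * Real.sin θ) * Real.sin θ -
    Real.sin (t * Real.sin θ)) / (Real.sin θ) ^ 3

/-!
Write `s = sin θ`, `c = cos θ` and `u = t s`. The numerator of `Jac` is linear in
`(cos u, sin u)`, and at a zero of the numerator the θ-derivative of `Jac` is the θ-derivative
of the numerator over `s³`, which is `t` times a second linear form in `(cos u, sin u)`.
If both forms vanished, `(cos u, sin u)` would be a nonzero solution of a homogeneous
2 × 2 system whose determinant is `c s² (3tc - t²c² - 3) = -c s² ((tc - 3/2)² + 3/4) ≠ 0`.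
-/

open Real

theorem HasDerivAt.div_of_apply_eq_zero {𝕜 : Type*} [NontriviallyNormedField 𝕜]
    {f g : 𝕜 → 𝕜} {f' g' x : 𝕜} (hf : HasDerivAt f f' x) (hg : HasDerivAt g g' x)
    (hfx : f x = 0) (hgx : g x ≠ 0) : HasDerivAt (fun y => f y / g y) (f' / g x) x := by
  refine (hf.fun_div hg hgx).congr_deriv ?_
  rw [hfx]
  field_simp
  ring

theorem eq_zero_of_linear_system {R : Type*} [CommRing R] [IsDomain R] {a b c d x y : R}
    (h₁ : a * x + b * y = 0) (h₂ : c * x + d * y = 0) (hdet : a * d - b * c ≠ 0) :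
    x = 0 ∧ y = 0 := by
  constructor
  · refine (mul_eq_zero.mp ?_).resolve_left hdet
    linear_combination d * h₁ - b * h₂
  · refine (mul_eq_zero.mp ?_).resolve_left hdet
    linear_combination a * h₂ - c * h₁

noncomputable def grushinNum (θ t : ℝ) : ℝ :=
  t * cos θ * cos (θ - t * sin θ) * sin θ - sin (t * sin θ)

theorem grushinNum_eq (θ t : ℝ) :
    grushinNum θ t = t * cos θ ^ 2 * sin θ * cos (t * sin θ)
      + (t * cos θ * sin θ ^ 2 - 1) * sin (t * sin θ) := by
  rw [grushinNum, cos_sub]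
  ring

theorem hasDerivAt_grushinNum (θ t : ℝ) :
    HasDerivAt (grushinNum · t)
      (t * (cos θ * sin θ ^ 2 * (t * cos θ - 3) * cos (t * sin θ)
        + sin θ * (3 * cos θ ^ 2 - 1 - t * cos θ ^ 3) * sin (t * sin θ))) θ := by
  have hts : HasDerivAt (fun x => t * sin x) (t * cos θ) θ := (hasDerivAt_sin θ).const_mul t
  have hshift : HasDerivAt (fun x => x - t * sin x) (1 - t * cos θ) θ :=
    (hasDerivAt_id θ).sub hts
  refine ((((hasDerivAt_cos θ).const_mul t).fun_mul hshift.cos).fun_mul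
    (hasDerivAt_sin θ)).fun_sub hts.sin |>.congr_deriv ?_
  rw [cos_sub, sin_sub]
  linear_combination
    (t * (cos θ * cos (t * sin θ) - sin θ * sin (t * sin θ))) * sin_sq_add_cos_sq θ

theorem grushinJac_eq_div (θ t : ℝ) : grushinJac θ t = grushinNum θ t / sin θ ^ 3 := rfl

theorem cos_ne_zero_of_mem_Ioo_of_ne_pi_div_two {θ : ℝ} (hθ : θ ∈ Set.Ioo 0 π)
    (hθ' : θ ≠ π / 2) : cos θ ≠ 0 := by
  rcases hθ'.lt_or_gt with h | h
  · exact (cos_pos_of_mem_Ioo ⟨by linarith [hθ.1, pi_pos], h⟩).ne'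
  · exact (cos_neg_of_pi_div_two_lt_of_lt h (by linarith [hθ.2, pi_pos])).ne

theorem grushin_det_ne_zero {s c t : ℝ} (hsc : s ^ 2 + c ^ 2 = 1) (hs : s ≠ 0) (hc : c ≠ 0) :
    t * c ^ 2 * s * (s * (3 * c ^ 2 - 1 - t * c ^ 3))
      - (t * c * s ^ 2 - 1) * (c * s ^ 2 * (t * c - 3)) ≠ 0 := by
  have hq : 3 * t * c - t ^ 2 * c ^ 2 - 3 < 0 := by nlinarith [sq_nonneg (t * c - 3 / 2)]
  have hdet : t * c ^ 2 * s * (s * (3 * c ^ 2 - 1 - t * c ^ 3))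
      - (t * c * s ^ 2 - 1) * (c * s ^ 2 * (t * c - 3))
      = c * s ^ 2 * (3 * t * c - t ^ 2 * c ^ 2 - 3) := by
    linear_combination (3 * t * c ^ 2 * s ^ 2 - t ^ 2 * c ^ 3 * s ^ 2) * hsc
  rw [hdet]
  exact mul_ne_zero (mul_ne_zero hc (pow_ne_zero 2 hs)) hq.ne

/-- For θ ∈ (0,π) with θ ≠ π/2, at any conjugate time t_θ > 0 (a zero of the Jacobian),
    the derivative of the Jacobian in θ does not vanish. -/
theorem grushin_conjugate_nondegenerate (θ t : ℝ) (hθ : θ ∈ Set.Ioo 0 Real.pi)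
    (hθ' : θ ≠ Real.pi / 2) (ht : 0 < t) (hJac : grushinJac θ t = 0) :
    deriv (fun θ' => grushinJac θ' t) θ ≠ 0 := by
  have hs : sin θ ≠ 0 := (sin_pos_of_pos_of_lt_pi hθ.1 hθ.2).ne'
  have hs3 : sin θ ^ 3 ≠ 0 := pow_ne_zero 3 hs
  rw [grushinJac_eq_div] at hJac
  have hNum : grushinNum θ t = 0 := (div_eq_zero_iff.mp hJac).resolve_right hs3
  simp only [grushinJac_eq_div]
  rw [((hasDerivAt_grushinNum θ t).div_of_apply_eq_zero
      ((hasDerivAt_sin θ).fun_pow 3) hNum hs3).deriv, div_ne_zero_iff, mul_ne_zero_iff]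
  refine ⟨⟨ht.ne', fun hDeriv => ?_⟩, hs3⟩
  rw [grushinNum_eq] at hNum
  have hc : cos θ ≠ 0 := cos_ne_zero_of_mem_Ioo_of_ne_pi_div_two hθ hθ'
  obtain ⟨hcos, hsin⟩ := eq_zero_of_linear_system hNum hDeriv
    (grushin_det_ne_zero (sin_sq_add_cos_sq θ) hs hc)
  simpa [hcos, hsin] using sin_sq_add_cos_sq (t * sin θ)
end

section
/- For every θ ∈ (0, π) there exists t > 0 such that t cos θ cos(θ − t sin θ) sin θ − sin(t sin θ) = 0, i.e., every Grushin geodesic from (−1,0) with θ ≠ 0 mod π has a conjugate time. -/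
/-!
At the times `t = nπ / sin θ` the sine term vanishes and `cos (θ - t sin θ) = (-1)ⁿ cos θ`, so
the numerator equals `(-1)ⁿ nπ cos² θ`. It is therefore `≤ 0` at `π / sin θ` and `≥ 0` at
`2π / sin θ`, and the intermediate value theorem gives a zero in between.
-/

open Real

noncomputable section

def grushinJacobianNum (θ t : ℝ) : ℝ :=
  t * cos θ * cos (θ - t * sin θ) * sin θ - sin (t * sin θ)

theorem continuous_grushinJacobianNum (θ : ℝ) : Continuous (grushinJacobianNum θ) := by
  unfold grushinJacobianNum
  fun_prop

theorem grushinJacobianNum_nat_mul_pi_div_sin {θ : ℝ} (hθ : sin θ ≠ 0) (n : ℕ) :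
    grushinJacobianNum θ (n * π / sin θ) = (-1) ^ n * (n * π) * cos θ ^ 2 := by
  have hcancel : n * π / sin θ * sin θ = n * π := div_mul_cancel₀ _ hθ
  simp only [grushinJacobianNum, hcancel, cos_sub_nat_mul_pi, sin_nat_mul_pi]
  linear_combination (-1) ^ n * cos θ ^ 2 * hcancel

end

/-- Every Grushin geodesic from (-1,0) with θ ∈ (0,π) has a conjugate time: a zero
    t > 0 of the numerator of the Jacobian of the exponential map. -/
theorem grushin_conjugate_time_exists (θ : ℝ) (hθ : θ ∈ Set.Ioo 0 Real.pi) :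
    ∃ t : ℝ, 0 < t ∧
      t * Real.cos θ * Real.cos (θ - t * Real.sin θ) * Real.sin θ -
        Real.sin (t * Real.sin θ) = 0 := by
  have hsin : 0 < sin θ := sin_pos_of_pos_of_lt_pi hθ.1 hθ.2
  have hle : 1 * π / sin θ ≤ 2 * π / sin θ := by gcongr; norm_num
  have hzero : (0 : ℝ) ∈ Set.Icc (grushinJacobianNum θ (1 * π / sin θ))
      (grushinJacobianNum θ (2 * π / sin θ)) := by
    have h1 := grushinJacobianNum_nat_mul_pi_div_sin hsin.ne' 1
    have h2 := grushinJacobianNum_nat_mul_pi_div_sin hsin.ne' 2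
    push_cast at h1 h2
    rw [h1, h2]
    constructor <;> nlinarith [pi_pos, sq_nonneg (cos θ)]
  obtain ⟨t, ht, hroot⟩ :=
    intermediate_value_Icc hle (continuous_grushinJacobianNum θ).continuousOn hzero
  exact ⟨t, (div_pos (by positivity) hsin).trans_le ht.1, hroot⟩
end

section
/- The wave front of the Grushin plane from (−1,0) is transversal to itself along the cut locus: for θ ∈ (0, π/2), the velocity vectors ∂γ/∂t(θ, π/sin θ) and ∂γ/∂t(π−θ, π/sin θ) are not parallel. -/
/-- Velocity vector ∂γ/∂t(θ,t) of the Grushin geodesic from (-1,0):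
    (1/sin θ)·(cos(θ − t sin θ) sin θ, sin²(θ − t sin θ)). -/
noncomputable def grushinVel (θ t : ℝ) : ℝ × ℝ :=
  (1 / Real.sin θ * (Real.cos (θ - t * Real.sin θ) * Real.sin θ),
   1 / Real.sin θ * (Real.sin (θ - t * Real.sin θ)) ^ 2)

/-! At the cut time `π / sin θ` the phase `θ - t sin θ` equals `θ - π`, so both velocities are
explicit: `(-cos θ, sin θ)` for the parameter `θ` and `(cos θ, sin θ)` for `π - θ`. Their
determinant is `-sin 2θ`, which is nonzero for `θ ∈ (0, π/2)`. -/

open Real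

lemma grushinVel_pi_div_sin {θ : ℝ} (hs : sin θ ≠ 0) :
    grushinVel θ (π / sin θ) = (-cos θ, sin θ) := by
  have hphase : θ - π / sin θ * sin θ = θ - π := by rw [div_mul_cancel₀ _ hs]
  simp only [grushinVel, hphase, sin_sub_pi, cos_sub_pi]
  ext <;> field_simp

lemma grushinVel_pi_sub_pi_div_sin {θ : ℝ} (hs : sin θ ≠ 0) :
    grushinVel (π - θ) (π / sin θ) = (cos θ, sin θ) := by
  have h := grushinVel_pi_div_sin (θ := π - θ) (by rwa [sin_pi_sub])
  rwa [sin_pi_sub, cos_pi_sub, neg_neg] at h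

/-- The wave front is transversal to itself along the cut locus: for θ ∈ (0,π/2), the
    velocities at time π/sin θ of the geodesics with parameters θ and π−θ are not
    parallel. -/
theorem grushin_front_transversal (θ : ℝ) (hθ : θ ∈ Set.Ioo 0 (Real.pi / 2)) :
    (grushinVel θ (Real.pi / Real.sin θ)).1 *
        (grushinVel (Real.pi - θ) (Real.pi / Real.sin θ)).2 -
      (grushinVel θ (Real.pi / Real.sin θ)).2 *
        (grushinVel (Real.pi - θ) (Real.pi / Real.sin θ)).1 ≠ 0 := by
  obtain ⟨h0, hπ2⟩ := hθ
  have hs : sin θ ≠ 0 := (sin_pos_of_pos_of_lt_pi h0 (by linarith [pi_pos])).ne'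
  have hsin2 : 0 < sin (2 * θ) := sin_pos_of_pos_of_lt_pi (by linarith) (by linarith)
  rw [grushinVel_pi_div_sin hs, grushinVel_pi_sub_pi_div_sin hs]
  have hdet : -cos θ * sin θ - sin θ * cos θ = -sin (2 * θ) := by rw [sin_two_mul]; ring
  simpa only [hdet, neg_ne_zero] using hsin2.ne'
end

section
/- The matching conditions α⁺π − 4a = −α⁻π − 4a and α⁺π − 8a/3 = α⁻π + 8a/3 have the unique solution α⁺ = 8a/(3π), α⁻ = −8a/(3π), and consequently the cut point is (x,y) = ρ₀²(−4a/3, π/2) + O(ρ₀³). -/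
/-! The first matching equation says α⁺π = −α⁻π, so α⁻ = −α⁺; substituting into the second
leaves 2α⁺π = 16a/3. Plugging α⁺ = 8a/(3π) into the first coordinate α⁺π − 4a of the
endpoint expansion gives −4a/3. -/

theorem antisymmetric_matching_iff {K : Type*} [Field K] [CharZero K] {c : K} (hc : c ≠ 0)
    (u v p q : K) :
    (p * c - u = -q * c - u ∧ p * c - v = q * c + v) ↔ (p = v / c ∧ q = -(v / c)) := by
  constructor
  · rintro ⟨h₁, h₂⟩
    have hq : q = -p := mul_right_cancel₀ hc (by linear_combination h₁)
    subst hq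
    have hp : p = v / c := by
      field_simp
      linear_combination h₂ / 2
    exact ⟨hp, by rw [hp]⟩
  · rintro ⟨rfl, rfl⟩
    constructor
    · ring
    · field_simp
      ring

/-- The matching conditions for the two geodesic expansions have the unique solution
    α⁺ = 8a/(3π), α⁻ = −8a/(3π), and consequently the second-order term of the cut
    point is ρ₀²(−4a/3, π/2). -/
theorem grushin_cut_matching (a αp αm : ℝ) :
    ((αp * Real.pi - 4 * a = -αm * Real.pi - 4 * a ∧
        αp * Real.pi - 8 * a / 3 = αm * Real.pi + 8 * a / 3) ↔
      (αp = 8 * a / (3 * Real.pi) ∧ αm = -(8 * a / (3 * Real.pi)))) ∧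
    ∀ ρ₀ : ℝ,
      ((8 * a / (3 * Real.pi)) * Real.pi - 4 * a) * ρ₀ ^ 2 = -(4 / 3 * a) * ρ₀ ^ 2 ∧
      (Real.pi / 2) * ρ₀ ^ 2 = (Real.pi / 2) * ρ₀ ^ 2 := by
  have hπ : Real.pi ≠ 0 := Real.pi_ne_zero
  have hα : 8 * a / 3 / Real.pi = 8 * a / (3 * Real.pi) := div_div _ _ _
  refine ⟨?_, fun ρ₀ => ⟨?_, rfl⟩⟩
  · rw [antisymmetric_matching_iff hπ, hα]
  · field_simp
    ring
end
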